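/- Let a ∈ ℝ^n be nonzero, let J : ℝ^n → ℝ^n be the linear involution J(x_1,...,x_n) = (-x_1,...,-x_k, x_{k+1},...,x_n), and define G : ℝ^n → ℝ^2 by G(x) = (μ_k^n(x), ⟨a, x⟩). Then: (1) the set of points where the derivative of G has rank < 2 is exactly the line ℝ·(Ja); (2) along this line, G(s·Ja) = (s^2·μ_k^n(a), s·μ_k^n(a)) for all s ∈ ℝ; (3) in particular, if μ_k^n(a) = 0 then G is constant, equal to (0,0), on the whole line ℝ·(Ja) of critical points of G. -/

import Mathlib

/-! The derivative of `G` at `x` is `y ↦ (⟨2Jx, y⟩, ⟨a, y⟩)`, a map to `ℝ²` whose rank is that of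
the pair of covectors `2Jx, a`. Since `a ≠ 0`, the rank drops exactly when `Jx ∈ ℝa`, i.e., as `J`
is a linear involution, when `x ∈ ℝ·Ja`. On that line `μ(s·Ja) = s²⟨Ja, a⟩ = s²μ(a)` and
`⟨a, s·Ja⟩ = sμ(a)`. -/

noncomputable section

/-- The standard index-`k` Morse model `μ_k^n` on `ℝ^n`. -/
def mu (n k : ℕ) (x : Fin n → ℝ) : ℝ :=
  ∑ i : Fin n, if (i : ℕ) < k then -(x i) ^ 2 else (x i) ^ 2

/-- The linear involution `J(x₁,…,xₙ) = (-x₁,…,-x_k, x_{k+1},…,xₙ)`. -/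
def Jmap (n k : ℕ) (x : Fin n → ℝ) : Fin n → ℝ :=
  fun i => if (i : ℕ) < k then -x i else x i

/-- The map `G(x) = (μ_k^n(x), ⟨a,x⟩)`. -/
def Gmap (n k : ℕ) (a : Fin n → ℝ) (x : Fin n → ℝ) : ℝ × ℝ :=
  (mu n k x, ∑ i : Fin n, a i * x i)

open Matrix

theorem LinearMap.rank_eq_rank_of_apply_eq_dotProduct {K ι : Type*} [Field K] [Fintype ι]
    {L : (ι → K) →ₗ[K] K × K} {b a : ι → K} (hL : ∀ y, L y = (b ⬝ᵥ y, a ⬝ᵥ y)) :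
    L.rank = (Matrix.of ![b, a]).rank := by
  have hL' : L = (LinearEquiv.finTwoArrow K K).toLinearMap ∘ₗ (Matrix.of ![b, a]).mulVecLin := by
    ext1 y
    simp [hL, mulVec]
  rw [LinearMap.rank, hL', LinearMap.range_comp, LinearEquiv.rank_map_eq, ← Module.finrank_eq_rank]
  rfl

theorem LinearMap.rank_lt_two_iff_exists_smul_eq {K ι : Type*} [Field K] [Fintype ι]
    {L : (ι → K) →ₗ[K] K × K} {b a : ι → K} (hL : ∀ y, L y = (b ⬝ᵥ y, a ⬝ᵥ y)) (ha : a ≠ 0) :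
    L.rank < 2 ↔ ∃ t : K, t • a = b := by
  have hle : (Matrix.of ![b, a]).rank ≤ 2 := (rank_le_card_height _).trans_eq (Fintype.card_fin 2)
  have hrank : (Matrix.of ![b, a]).rank = 2 ↔ LinearIndependent K ![b, a] := by
    rw [rank_eq_finrank_span_row, linearIndependent_iff_card_eq_finrank_span, Fintype.card_fin,
      eq_comm, Set.finrank]
    rfl
  rw [linearIndependent_fin2] at hrank
  simp only [cons_val_one, cons_val_zero, ne_eq, ha, not_false_eq_true, true_and,
    ← not_exists] at hrank
  rw [rank_eq_rank_of_apply_eq_dotProduct hL]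
  norm_cast
  rw [hle.lt_iff_ne, Ne, hrank, not_not]

namespace Jmap

variable {n k : ℕ}

theorem smul (s : ℝ) (x : Fin n → ℝ) : Jmap n k (s • x) = s • Jmap n k x := by
  ext i
  by_cases h : (i : ℕ) < k <;> simp [Jmap, h]

theorem involutive : Function.Involutive (Jmap n k) := by
  intro x
  ext i
  by_cases h : (i : ℕ) < k <;> simp [Jmap, h]

theorem eq_smul_iff {x a : Fin n → ℝ} {s : ℝ} : Jmap n k x = s • a ↔ x = s • Jmap n k a := by
  constructor
  · intro h
    rw [← involutive x, h, smul]
  · rintro rfl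
    rw [smul, involutive]

theorem exists_smul_eq_smul_iff {a x : Fin n → ℝ} {c : ℝ} (hc : c ≠ 0) :
    (∃ t : ℝ, t • a = c • Jmap n k x) ↔ ∃ s : ℝ, x = s • Jmap n k a := by
  constructor
  · rintro ⟨t, ht⟩
    refine ⟨c⁻¹ * t, eq_smul_iff.1 ?_⟩
    rw [mul_smul, ht, inv_smul_smul₀ hc]
  · rintro ⟨s, rfl⟩
    exact ⟨c * s, by rw [smul, involutive, mul_smul]⟩

end Jmap

theorem mu_eq_dotProduct (n k : ℕ) (x : Fin n → ℝ) : mu n k x = x ⬝ᵥ Jmap n k x := by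
  refine Finset.sum_congr rfl fun i _ => ?_
  by_cases h : (i : ℕ) < k <;> simp [Jmap, h, sq]

theorem Gmap_eq (n k : ℕ) (a x : Fin n → ℝ) : Gmap n k a x = (x ⬝ᵥ Jmap n k x, a ⬝ᵥ x) := by
  rw [Gmap, mu_eq_dotProduct]
  rfl

theorem Gmap_smul_Jmap (n k : ℕ) (a : Fin n → ℝ) (s : ℝ) :
    Gmap n k a (s • Jmap n k a) = (s ^ 2 * mu n k a, s * mu n k a) := by
  rw [Gmap_eq, Jmap.smul, Jmap.involutive, mu_eq_dotProduct]
  simp only [smul_dotProduct, dotProduct_smul, smul_eq_mul, dotProduct_comm (Jmap n k a) a]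
  ring_nf

theorem hasFDerivAt_mu (n k : ℕ) (x : Fin n → ℝ) :
    HasFDerivAt (mu n k)
      (∑ i, (2 * Jmap n k x i) • (ContinuousLinearMap.proj i : (Fin n → ℝ) →L[ℝ] ℝ)) x := by
  refine HasFDerivAt.fun_sum fun i _ => ?_
  have hsq : HasFDerivAt (fun y : Fin n → ℝ => y i ^ 2)
      ((2 * x i) • (ContinuousLinearMap.proj i : (Fin n → ℝ) →L[ℝ] ℝ)) x := by
    simpa using (ContinuousLinearMap.proj i : (Fin n → ℝ) →L[ℝ] ℝ).hasFDerivAt.pow 2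
  by_cases h : (i : ℕ) < k
  · convert hsq.fun_neg using 1
    · simp [h]
    · simp only [Jmap, h, if_true, mul_neg]
      exact neg_smul _ _
  · simpa [Jmap, h] using hsq

theorem fderiv_Gmap_apply (n k : ℕ) (a x y : Fin n → ℝ) :
    fderiv ℝ (Gmap n k a) x y = (((2 : ℝ) • Jmap n k x) ⬝ᵥ y, a ⬝ᵥ y) := by
  have hdot : HasFDerivAt (fun y : Fin n → ℝ => ∑ i, a i * y i)
      (∑ i, a i • (ContinuousLinearMap.proj i : (Fin n → ℝ) →L[ℝ] ℝ)) x :=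
    HasFDerivAt.fun_sum fun i _ =>
      (ContinuousLinearMap.proj i : (Fin n → ℝ) →L[ℝ] ℝ).hasFDerivAt.const_mul (a i)
  have hG : HasFDerivAt (Gmap n k a) _ x := (hasFDerivAt_mu n k x).prodMk hdot
  rw [hG.fderiv]
  simp [dotProduct]

theorem stmt8_general (n k : ℕ) (a : Fin n → ℝ) (ha : a ≠ 0) :
    ({x : Fin n → ℝ |
        LinearMap.rank (fderiv ℝ (Gmap n k a) x).toLinearMap < 2} =
      {x : Fin n → ℝ | ∃ s : ℝ, x = s • Jmap n k a}) ∧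
    (∀ s : ℝ, Gmap n k a (s • Jmap n k a) = (s ^ 2 * mu n k a, s * mu n k a)) ∧
    (mu n k a = 0 → ∀ s : ℝ, Gmap n k a (s • Jmap n k a) = (0, 0)) := by
  refine ⟨?_, Gmap_smul_Jmap n k a, fun hmu s => by rw [Gmap_smul_Jmap, hmu, mul_zero, mul_zero]⟩
  ext x
  exact (LinearMap.rank_lt_two_iff_exists_smul_eq (fderiv_Gmap_apply n k a x) ha).trans
    (Jmap.exists_smul_eq_smul_iff two_ne_zero)

/-- For `a ≠ 0`: (1) the singular set of `G = (μ_k^n, ⟨a,·⟩)` is exactly the line `ℝ·(Ja)`;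
(2) `G(s·Ja) = (s²μ_k^n(a), sμ_k^n(a))`; (3) if `μ_k^n(a) = 0` then `G` is constant `(0,0)`
on the whole line of critical points. -/
theorem stmt8 (n k : ℕ) (hk : k ≤ n) (a : Fin n → ℝ) (ha : a ≠ 0) :
    ({x : Fin n → ℝ |
        LinearMap.rank (fderiv ℝ (Gmap n k a) x).toLinearMap < 2} =
      {x : Fin n → ℝ | ∃ s : ℝ, x = s • Jmap n k a}) ∧
    (∀ s : ℝ, Gmap n k a (s • Jmap n k a) = (s ^ 2 * mu n k a, s * mu n k a)) ∧
    (mu n k a = 0 → ∀ s : ℝ, Gmap n k a (s • Jmap n k a) = (0, 0)) :=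
  stmt8_general n k a ha
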